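/- Let θ, χ : ℝ → ℂ be Schwartz functions. Then ∫_ℝ ∫_ℝ |θ̂(ξ−η)| |η| |θ̂(η)| |χ̂(ξ)| dη dξ ≤ ( ∫_ℝ |ω| |θ̂(ω)|² dω ) · ( ∫_ℝ |χ̂(ξ)| dξ ) + ( ∫_ℝ |ω| |θ̂(ω)|² dω )^{1/2} · ( ∫_ℝ |θ̂(ω)| dω ) · ( ∫_ℝ |ξ| |χ̂(ξ)|² dξ )^{1/2}. -/

import Mathlib

/-!
Split the weight as `|η|^{1/2} |η|^{1/2} ≤ (|ξ - η|^{1/2} + |ξ|^{1/2}) |η|^{1/2}`.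
With `g = |·|^{1/2} |θ̂|` and `h = |·|^{1/2} |χ̂|`, the first half is
`∫ |χ̂(ξ)| (g ⋆ g)(ξ) dξ` and Cauchy–Schwarz in `η` bounds `g ⋆ g` by `‖g‖₂²`; the second half is
`∫∫ |θ̂(ξ - η)| g(η) h(ξ)`, which Cauchy–Schwarz on the product space for the weight
`|θ̂(ξ - η)|` bounds by `‖θ̂‖₁ ‖g‖₂ ‖h‖₂`.
-/

open MeasureTheory

open scoped ENNReal FourierTransform SchwartzMap

/-- The Fourier transform normalized as `f̂(ξ) = (2π)^{-1/2} ∫ f(x) e^{-ixξ} dx`. -/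
noncomputable def fourierTrans (f : ℝ → ℂ) (ξ : ℝ) : ℂ :=
  (((2 * Real.pi) ^ (-(1 / 2 : ℝ)) : ℝ) : ℂ) *
    ∫ x : ℝ, f x * Complex.exp (-Complex.I * (x : ℂ) * (ξ : ℂ))

namespace ENNReal

lemma rpow_half_mul_self (x : ℝ≥0∞) : x ^ (1 / 2 : ℝ) * x ^ (1 / 2 : ℝ) = x := by
  rw [← ENNReal.rpow_add_of_nonneg _ _ (by norm_num) (by norm_num)]
  norm_num

end ENNReal

section CauchySchwarz

variable {α : Type*} [MeasurableSpace α] {μ : Measure α} {f g : α → ℝ≥0∞}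

theorem lintegral_mul_le_L2_mul_L2 (hf : AEMeasurable f μ) (hg : AEMeasurable g μ) :
    ∫⁻ x, f x * g x ∂μ ≤ (∫⁻ x, f x ^ 2 ∂μ) ^ (1 / 2 : ℝ) * (∫⁻ x, g x ^ 2 ∂μ) ^ (1 / 2 : ℝ) := by
  simpa using ENNReal.lintegral_mul_le_Lp_mul_Lq μ Real.HolderConjugate.two_two hf hg

theorem lintegral_mul_mul_le_L2_mul_L2 {w : α → ℝ≥0∞} (hw : AEMeasurable w μ)
    (hf : AEMeasurable f μ) (hg : AEMeasurable g μ) :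
    ∫⁻ x, w x * f x * g x ∂μ ≤
      (∫⁻ x, w x * f x ^ 2 ∂μ) ^ (1 / 2 : ℝ) * (∫⁻ x, w x * g x ^ 2 ∂μ) ^ (1 / 2 : ℝ) := by
  have hac := withDensity_absolutelyContinuous μ w
  have h := lintegral_mul_le_L2_mul_L2 (hf.mono_ac hac) (hg.mono_ac hac)
  have hfg := lintegral_withDensity_eq_lintegral_mul₀ hw (hf.mul hg)
  simp only [lintegral_withDensity_eq_lintegral_mul₀ hw, hf.pow_const 2, hg.pow_const 2,
    Pi.mul_apply] at h hfg
  simpa only [hfg, mul_assoc] using h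

end CauchySchwarz

section AddCommGroup

variable {G : Type*} [AddCommGroup G] [MeasurableSpace G] [MeasurableAdd₂ G] [MeasurableNeg G]
  {μ : Measure G} [μ.IsAddLeftInvariant]

theorem lintegral_comp_sub_mul_le_lintegral_sq [μ.IsNegInvariant] {g : G → ℝ≥0∞}
    (hg : Measurable g) (ξ : G) :
    ∫⁻ η, g (ξ - η) * g η ∂μ ≤ ∫⁻ η, g η ^ 2 ∂μ := by
  calc ∫⁻ η, g (ξ - η) * g η ∂μ
      ≤ (∫⁻ η, g (ξ - η) ^ 2 ∂μ) ^ (1 / 2 : ℝ) * (∫⁻ η, g η ^ 2 ∂μ) ^ (1 / 2 : ℝ) :=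
        lintegral_mul_le_L2_mul_L2 (by fun_prop) hg.aemeasurable
    _ = ∫⁻ η, g η ^ 2 ∂μ := by
        rw [lintegral_sub_left_eq_self (fun η => g η ^ 2), ENNReal.rpow_half_mul_self]

variable [SFinite μ]

theorem lintegral_prod_comp_sub_mul_snd {a f : G → ℝ≥0∞} (ha : Measurable a)
    (hf : Measurable f) :
    ∫⁻ p, a (p.1 - p.2) * f p.2 ∂μ.prod μ = (∫⁻ x, a x ∂μ) * ∫⁻ x, f x ∂μ := by
  rw [lintegral_prod_symm _ (by fun_prop), ← lintegral_const_mul _ hf]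
  refine lintegral_congr fun η => ?_
  dsimp only
  rw [lintegral_mul_const _ (by fun_prop)]
  simp_rw [sub_eq_neg_add, lintegral_add_left_eq_self a]

theorem lintegral_prod_comp_sub_mul_fst [μ.IsNegInvariant] {a f : G → ℝ≥0∞}
    (ha : Measurable a) (hf : Measurable f) :
    ∫⁻ p, a (p.1 - p.2) * f p.1 ∂μ.prod μ = (∫⁻ x, a x ∂μ) * ∫⁻ x, f x ∂μ := by
  rw [lintegral_prod _ (by fun_prop), ← lintegral_const_mul _ hf]
  refine lintegral_congr fun ξ => ?_
  dsimp only
  rw [lintegral_mul_const _ (by fun_prop), lintegral_sub_left_eq_self a]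

theorem lintegral_lintegral_comp_sub_mul_mul_le [μ.IsNegInvariant] {a g h : G → ℝ≥0∞}
    (ha : Measurable a) (hg : Measurable g) (hh : Measurable h) :
    ∫⁻ ξ, ∫⁻ η, a (ξ - η) * g η * h ξ ∂μ ∂μ ≤
      (∫⁻ x, a x ∂μ) * (∫⁻ x, g x ^ 2 ∂μ) ^ (1 / 2 : ℝ) * (∫⁻ x, h x ^ 2 ∂μ) ^ (1 / 2 : ℝ) := by
  calc ∫⁻ ξ, ∫⁻ η, a (ξ - η) * g η * h ξ ∂μ ∂μ
      = ∫⁻ p, a (p.1 - p.2) * g p.2 * h p.1 ∂μ.prod μ :=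
        (lintegral_prod (fun p => a (p.1 - p.2) * g p.2 * h p.1) (by fun_prop)).symm
    _ ≤ (∫⁻ p, a (p.1 - p.2) * g p.2 ^ 2 ∂μ.prod μ) ^ (1 / 2 : ℝ) *
          (∫⁻ p, a (p.1 - p.2) * h p.1 ^ 2 ∂μ.prod μ) ^ (1 / 2 : ℝ) :=
        lintegral_mul_mul_le_L2_mul_L2 (by fun_prop) (by fun_prop) (by fun_prop)
    _ = ((∫⁻ x, a x ∂μ) ^ (1 / 2 : ℝ) * (∫⁻ x, a x ∂μ) ^ (1 / 2 : ℝ)) *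
          (∫⁻ x, g x ^ 2 ∂μ) ^ (1 / 2 : ℝ) * (∫⁻ x, h x ^ 2 ∂μ) ^ (1 / 2 : ℝ) := by
        rw [lintegral_prod_comp_sub_mul_snd ha (hg.pow_const 2),
          lintegral_prod_comp_sub_mul_fst ha (hh.pow_const 2),
          ENNReal.mul_rpow_of_nonneg _ _ (by norm_num),
          ENNReal.mul_rpow_of_nonneg _ _ (by norm_num)]
        ring
    _ = _ := by rw [ENNReal.rpow_half_mul_self]

end AddCommGroup

theorem integral_integral_toReal {α β : Type*} [MeasurableSpace α] [MeasurableSpace β]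
    {μ : Measure α} {ν : Measure β} [SFinite ν] {F : α → β → ℝ≥0∞}
    (hF : Measurable (Function.uncurry F)) (hF_top : ∀ x y, F x y ≠ ∞)
    (hF_int : ∫⁻ x, ∫⁻ y, F x y ∂ν ∂μ ≠ ∞) :
    ∫ x, ∫ y, (F x y).toReal ∂ν ∂μ = (∫⁻ x, ∫⁻ y, F x y ∂ν ∂μ).toReal := by
  have hinner : ∀ x, ∫ y, (F x y).toReal ∂ν = (∫⁻ y, F x y ∂ν).toReal := fun x =>
    integral_toReal (hF.comp measurable_prodMk_left).aemeasurable
      (.of_forall fun y => (hF_top x y).lt_top)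
  have hmeas : Measurable fun x => ∫⁻ y, F x y ∂ν := hF.lintegral_prod_right'
  simp_rw [hinner]
  exact integral_toReal hmeas.aemeasurable (ae_lt_top hmeas hF_int)

section NormedAddCommGroup

variable {G : Type*} [NormedAddCommGroup G]

theorem enorm_le_rpow_half_mul_add (ξ η : G) :
    ‖η‖ₑ ≤ ‖ξ - η‖ₑ ^ (1 / 2 : ℝ) * ‖η‖ₑ ^ (1 / 2 : ℝ) +
      ‖η‖ₑ ^ (1 / 2 : ℝ) * ‖ξ‖ₑ ^ (1 / 2 : ℝ) := by
  have htri : ‖η‖ₑ ≤ ‖ξ - η‖ₑ + ‖ξ‖ₑ := by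
    simpa [enorm_sub_rev ξ η, add_comm] using enorm_sub_le (a := η - ξ) (b := -ξ)
  calc ‖η‖ₑ = ‖η‖ₑ ^ (1 / 2 : ℝ) * ‖η‖ₑ ^ (1 / 2 : ℝ) := (ENNReal.rpow_half_mul_self _).symm
    _ ≤ (‖ξ - η‖ₑ ^ (1 / 2 : ℝ) + ‖ξ‖ₑ ^ (1 / 2 : ℝ)) * ‖η‖ₑ ^ (1 / 2 : ℝ) := by
        gcongr
        exact (ENNReal.rpow_le_rpow htri (by norm_num)).trans
          (ENNReal.rpow_add_le_add_rpow _ _ (by norm_num) (by norm_num))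
    _ = _ := by ring

variable [MeasurableSpace G] {μ : Measure G} {E : Type*} [NormedAddCommGroup E]

theorem lintegral_enorm_mul_enorm_sq_ne_top {f : G → E}
    (hf : Integrable (fun x => ‖x‖ * ‖f x‖ ^ 2) μ) :
    ∫⁻ x, ‖x‖ₑ * ‖f x‖ₑ ^ 2 ∂μ ≠ ∞ := by
  simpa [enorm_mul, enorm_pow, enorm_norm] using hf.hasFiniteIntegral.ne

variable [BorelSpace G]

theorem integral_norm_mul_norm_sq_eq_toReal {f : G → E} (hf : StronglyMeasurable f) :
    ∫ x, ‖x‖ * ‖f x‖ ^ 2 ∂μ = (∫⁻ x, ‖x‖ₑ * ‖f x‖ₑ ^ 2 ∂μ).toReal := by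
  rw [← integral_toReal (by fun_prop) (.of_forall fun x => by finiteness)]
  simp only [ENNReal.toReal_mul, ENNReal.toReal_pow, toReal_enorm]

variable [MeasurableAdd₂ G] [SFinite μ] [μ.IsAddLeftInvariant] [μ.IsNegInvariant]

theorem lintegral_lintegral_weighted_conv_le {a c : G → ℝ≥0∞} (ha : Measurable a)
    (hc : Measurable c) :
    ∫⁻ ξ, ∫⁻ η, a (ξ - η) * ‖η‖ₑ * a η * c ξ ∂μ ∂μ ≤
      (∫⁻ ω, ‖ω‖ₑ * a ω ^ 2 ∂μ) * (∫⁻ ξ, c ξ ∂μ) +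
        (∫⁻ ω, ‖ω‖ₑ * a ω ^ 2 ∂μ) ^ (1 / 2 : ℝ) * (∫⁻ ω, a ω ∂μ) *
          (∫⁻ ξ, ‖ξ‖ₑ * c ξ ^ 2 ∂μ) ^ (1 / 2 : ℝ) := by
  set g : G → ℝ≥0∞ := fun ω => ‖ω‖ₑ ^ (1 / 2 : ℝ) * a ω
  set h : G → ℝ≥0∞ := fun ξ => ‖ξ‖ₑ ^ (1 / 2 : ℝ) * c ξ
  have hg : Measurable g := by fun_prop
  have hh : Measurable h := by fun_prop
  have hg_sq : ∀ ω, g ω ^ 2 = ‖ω‖ₑ * a ω ^ 2 := fun ω => by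
    rw [mul_pow, sq (‖ω‖ₑ ^ _), ENNReal.rpow_half_mul_self]
  have hh_sq : ∀ ξ, h ξ ^ 2 = ‖ξ‖ₑ * c ξ ^ 2 := fun ξ => by
    rw [mul_pow, sq (‖ξ‖ₑ ^ _), ENNReal.rpow_half_mul_self]
  have hsplit : ∀ ξ η, a (ξ - η) * ‖η‖ₑ * a η * c ξ ≤
      c ξ * (g (ξ - η) * g η) + a (ξ - η) * g η * h ξ := fun ξ η =>
    calc a (ξ - η) * ‖η‖ₑ * a η * c ξ
        ≤ a (ξ - η) * (‖ξ - η‖ₑ ^ (1 / 2 : ℝ) * ‖η‖ₑ ^ (1 / 2 : ℝ) +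
            ‖η‖ₑ ^ (1 / 2 : ℝ) * ‖ξ‖ₑ ^ (1 / 2 : ℝ)) * a η * c ξ := by
          gcongr; exact enorm_le_rpow_half_mul_add ξ η
      _ = _ := by simp only [g, h]; ring
  have hinner : ∀ ξ, ∫⁻ η, a (ξ - η) * ‖η‖ₑ * a η * c ξ ∂μ ≤
      c ξ * ∫⁻ ω, g ω ^ 2 ∂μ + ∫⁻ η, a (ξ - η) * g η * h ξ ∂μ := fun ξ =>
    calc ∫⁻ η, a (ξ - η) * ‖η‖ₑ * a η * c ξ ∂μ
        ≤ ∫⁻ η, c ξ * (g (ξ - η) * g η) + a (ξ - η) * g η * h ξ ∂μ :=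
          lintegral_mono (hsplit ξ)
      _ = c ξ * ∫⁻ η, g (ξ - η) * g η ∂μ + ∫⁻ η, a (ξ - η) * g η * h ξ ∂μ := by
          rw [lintegral_add_left (by fun_prop), lintegral_const_mul _ (by fun_prop)]
      _ ≤ _ := by grw [lintegral_comp_sub_mul_le_lintegral_sq hg ξ]
  calc ∫⁻ ξ, ∫⁻ η, a (ξ - η) * ‖η‖ₑ * a η * c ξ ∂μ ∂μ
      ≤ ∫⁻ ξ, c ξ * ∫⁻ ω, g ω ^ 2 ∂μ + ∫⁻ η, a (ξ - η) * g η * h ξ ∂μ ∂μ :=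
        lintegral_mono hinner
    _ = (∫⁻ ω, g ω ^ 2 ∂μ) * (∫⁻ ξ, c ξ ∂μ) + ∫⁻ ξ, ∫⁻ η, a (ξ - η) * g η * h ξ ∂μ ∂μ := by
        rw [lintegral_add_left (by fun_prop), lintegral_mul_const _ hc, mul_comm]
    _ ≤ (∫⁻ ω, g ω ^ 2 ∂μ) * (∫⁻ ξ, c ξ ∂μ) +
          (∫⁻ ω, a ω ∂μ) * (∫⁻ ω, g ω ^ 2 ∂μ) ^ (1 / 2 : ℝ) *
            (∫⁻ ξ, h ξ ^ 2 ∂μ) ^ (1 / 2 : ℝ) := by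
        gcongr; exact lintegral_lintegral_comp_sub_mul_mul_le ha hg hh
    _ = _ := by simp only [hg_sq, hh_sq]; ring

theorem integral_integral_weighted_conv_le {f k : G → E} (hf : StronglyMeasurable f)
    (hk : StronglyMeasurable k) (hf_int : Integrable f μ) (hk_int : Integrable k μ)
    (hf_wt : Integrable (fun x => ‖x‖ * ‖f x‖ ^ 2) μ)
    (hk_wt : Integrable (fun x => ‖x‖ * ‖k x‖ ^ 2) μ) :
    ∫ ξ, ∫ η, ‖f (ξ - η)‖ * ‖η‖ * ‖f η‖ * ‖k ξ‖ ∂μ ∂μ ≤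
      (∫ ω, ‖ω‖ * ‖f ω‖ ^ 2 ∂μ) * (∫ ξ, ‖k ξ‖ ∂μ) +
        (∫ ω, ‖ω‖ * ‖f ω‖ ^ 2 ∂μ) ^ (1 / 2 : ℝ) * (∫ ω, ‖f ω‖ ∂μ) *
          (∫ ξ, ‖ξ‖ * ‖k ξ‖ ^ 2 ∂μ) ^ (1 / 2 : ℝ) := by
  have hf_fin := hf_int.hasFiniteIntegral.ne
  have hk_fin := hk_int.hasFiniteIntegral.ne
  have hf_wt_fin := lintegral_enorm_mul_enorm_sq_ne_top hf_wt
  have hk_wt_fin := lintegral_enorm_mul_enorm_sq_ne_top hk_wt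
  have hbound := lintegral_lintegral_weighted_conv_le (μ := μ) hf.enorm hk.enorm
  have hbound_ne_top : (∫⁻ ω, ‖ω‖ₑ * ‖f ω‖ₑ ^ 2 ∂μ) * (∫⁻ ξ, ‖k ξ‖ₑ ∂μ) +
      (∫⁻ ω, ‖ω‖ₑ * ‖f ω‖ₑ ^ 2 ∂μ) ^ (1 / 2 : ℝ) * (∫⁻ ω, ‖f ω‖ₑ ∂μ) *
        (∫⁻ ξ, ‖ξ‖ₑ * ‖k ξ‖ₑ ^ 2 ∂μ) ^ (1 / 2 : ℝ) ≠ ∞ := by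
    finiteness
  calc ∫ ξ, ∫ η, ‖f (ξ - η)‖ * ‖η‖ * ‖f η‖ * ‖k ξ‖ ∂μ ∂μ
      = (∫⁻ ξ, ∫⁻ η, ‖f (ξ - η)‖ₑ * ‖η‖ₑ * ‖f η‖ₑ * ‖k ξ‖ₑ ∂μ ∂μ).toReal := by
        rw [← integral_integral_toReal (by fun_prop) (fun _ _ => by finiteness)
          (hbound.trans_lt hbound_ne_top.lt_top).ne]
        simp only [ENNReal.toReal_mul, toReal_enorm]
    _ ≤ _ := ENNReal.toReal_mono hbound_ne_top hbound
    _ = _ := by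
        rw [ENNReal.toReal_add (by finiteness) (by finiteness)]
        simp only [ENNReal.toReal_mul, ENNReal.toReal_rpow,
          integral_norm_mul_norm_sq_eq_toReal hf, integral_norm_mul_norm_sq_eq_toReal hk,
          integral_norm_eq_lintegral_enorm hf.aestronglyMeasurable,
          integral_norm_eq_lintegral_enorm hk.aestronglyMeasurable]

end NormedAddCommGroup

theorem SchwartzMap.integrable_norm_mul_norm_sq {D V : Type*} [NormedAddCommGroup D]
    [NormedSpace ℝ D] [MeasurableSpace D] [BorelSpace D] [SecondCountableTopology D]
    [NormedAddCommGroup V] [NormedSpace ℝ V] {μ : Measure D} [μ.HasTemperateGrowth]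
    (f : 𝓢(D, V)) : Integrable (fun x => ‖x‖ * ‖f x‖ ^ 2) μ := by
  have h := (f.integrable_pow_mul μ 1).mul_bdd f.continuous.norm.aestronglyMeasurable
    (.of_forall fun x => (norm_norm (f x)).trans_le (f.norm_le_seminorm ℝ x))
  simpa only [pow_one, mul_assoc, ← sq] using h

theorem fourierTrans_eq_fourier (f : ℝ → ℂ) (ξ : ℝ) :
    fourierTrans f ξ = ((2 * Real.pi) ^ (-(1 / 2 : ℝ)) : ℝ) * 𝓕 f (ξ / (2 * Real.pi)) := by
  rw [fourierTrans, Real.fourier_real_eq_integral_exp_smul]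
  congr 1
  refine integral_congr_ae (.of_forall fun x => ?_)
  have hx : -2 * Real.pi * x * (ξ / (2 * Real.pi)) = -(x * ξ) := by
    field_simp
  simp only [hx, smul_eq_mul, mul_comm (f x)]
  push_cast
  ring_nf

theorem exists_schwartzMap_eq_fourierTrans (θ : 𝓢(ℝ, ℂ)) :
    ∃ g : 𝓢(ℝ, ℂ), ⇑g = fourierTrans θ := by
  have h2π : (2 * Real.pi)⁻¹ ≠ 0 := by positivity
  refine ⟨((2 * Real.pi) ^ (-(1 / 2 : ℝ)) : ℝ) • SchwartzMap.compCLMOfContinuousLinearEquiv ℂ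
    (ContinuousLinearEquiv.unitsEquivAut ℝ (Units.mk0 _ h2π)) (𝓕 θ), ?_⟩
  ext ξ
  simp [fourierTrans_eq_fourier, div_eq_mul_inv, SchwartzMap.fourier_coe]

/-- Duality estimate used to bound the pairing `⟨θ Λθ, χ⟩` for Schwartz `θ, χ`:
`∫∫ |θ̂(ξ−η)| |η| |θ̂(η)| |χ̂(ξ)| dη dξ
  ≤ ‖Λ^{1/2}θ‖²_{L²} ‖χ̂‖_{L¹} + ‖Λ^{1/2}θ‖_{L²} ‖θ̂‖_{L¹} ‖Λ^{1/2}χ‖_{L²}`. -/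
theorem duality_estimate (θ χ : SchwartzMap ℝ ℂ) :
    (∫ ξ : ℝ, ∫ η : ℝ,
        ‖fourierTrans (⇑θ) (ξ - η)‖ * |η| * ‖fourierTrans (⇑θ) η‖ * ‖fourierTrans (⇑χ) ξ‖) ≤
      (∫ ω : ℝ, |ω| * ‖fourierTrans (⇑θ) ω‖ ^ 2) * (∫ ξ : ℝ, ‖fourierTrans (⇑χ) ξ‖) +
        (∫ ω : ℝ, |ω| * ‖fourierTrans (⇑θ) ω‖ ^ 2) ^ ((1 : ℝ) / 2) *
          (∫ ω : ℝ, ‖fourierTrans (⇑θ) ω‖) *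
          (∫ ξ : ℝ, |ξ| * ‖fourierTrans (⇑χ) ξ‖ ^ 2) ^ ((1 : ℝ) / 2) := by
  obtain ⟨g, hg⟩ := exists_schwartzMap_eq_fourierTrans θ
  obtain ⟨h, hh⟩ := exists_schwartzMap_eq_fourierTrans χ
  rw [← hg, ← hh]
  exact integral_integral_weighted_conv_le g.continuous.stronglyMeasurable
    h.continuous.stronglyMeasurable g.integrable h.integrable
    g.integrable_norm_mul_norm_sq h.integrable_norm_mul_norm_sq
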